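/- Let z₁,…,z_τ be vectors in ℝ^d and Σ a positive definite matrix such that the whitened vectors w_t = Σ^{-1/2} z_t satisfy inf_{‖v‖=1} max_{t∈[τ]} ⟨w_t, v⟩² ≥ 1 − ε for some ε ∈ (0,1). Then for every positive definite matrix A, max_{t∈[τ]} ‖z_t‖_A² ≥ (1 − ε)·λ₁(A)·λ_min(Σ). -/

import Mathlib

/-!
Let `u` be an eigenvector of `A` for `λ₁(A)`. Testing the hypothesis on the unit vector along
`S u` and using `⟨S⁻¹ z, S u⟩ = ⟨z, u⟩` yields a `t` with
`⟨z_t, u⟩² ≥ (1 - ε) uᵀ Σ u ≥ (1 - ε) λ_min(Σ) ‖u‖²`.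
Cauchy–Schwarz for the form `A`, together with `A u = λ₁(A) u`, gives
`(z_tᵀ A z_t) ‖u‖² ≥ λ₁(A) ⟨z_t, u⟩²`, and the two inequalities combine.
-/

open Matrix

/-- `lam` is the largest eigenvalue of the matrix `A`. -/
def IsMaxEigenvalue {d : ℕ} (A : Matrix (Fin d) (Fin d) ℝ) (lam : ℝ) : Prop :=
  (∃ v : Fin d → ℝ, v ≠ 0 ∧ A *ᵥ v = lam • v) ∧
    ∀ μ : ℝ, (∃ v : Fin d → ℝ, v ≠ 0 ∧ A *ᵥ v = μ • v) → μ ≤ lam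

/-- `lam` is the smallest eigenvalue of the matrix `A`. -/
def IsMinEigenvalue {d : ℕ} (A : Matrix (Fin d) (Fin d) ℝ) (lam : ℝ) : Prop :=
  (∃ v : Fin d → ℝ, v ≠ 0 ∧ A *ᵥ v = lam • v) ∧
    ∀ μ : ℝ, (∃ v : Fin d → ℝ, v ≠ 0 ∧ A *ᵥ v = μ • v) → lam ≤ μ

namespace Matrix

variable {n : Type*} [Fintype n]

lemma dotProduct_self_pos_of_ne_zero {u : n → ℝ} (hu : u ≠ 0) : 0 < u ⬝ᵥ u := by
  simpa using dotProduct_self_star_pos_iff.mpr hu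

lemma IsHermitian.dotProduct_mulVec_comm {M : Matrix n n ℝ} (hM : M.IsHermitian) (x y : n → ℝ) :
    x ⬝ᵥ M *ᵥ y = y ⬝ᵥ M *ᵥ x := by
  rw [dotProduct_mulVec, ← mulVec_transpose, ← conjTranspose_eq_transpose_of_trivial, hM.eq,
    dotProduct_comm]

lemma PosSemidef.dotProduct_mulVec_sq_le [DecidableEq n] {M : Matrix n n ℝ} (hM : M.PosSemidef)
    (x y : n → ℝ) : (x ⬝ᵥ M *ᵥ y) ^ 2 ≤ (x ⬝ᵥ M *ᵥ x) * (y ⬝ᵥ M *ᵥ y) := by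
  have hB := LinearMap.BilinForm.apply_mul_apply_le_of_forall_zero_le (toLinearMap₂' ℝ M)
    (fun v => by simpa [toLinearMap₂'_apply'] using hM.dotProduct_mulVec_nonneg v) x y
  simp only [toLinearMap₂'_apply'] at hB
  rw [hM.isHermitian.dotProduct_mulVec_comm y x] at hB
  rwa [sq]

lemma PosSemidef.nonneg_of_mulVec_eq_smul {M : Matrix n n ℝ} (hM : M.PosSemidef) {μ : ℝ}
    {u : n → ℝ} (hu : u ≠ 0) (hMu : M *ᵥ u = μ • u) : 0 ≤ μ := by
  have hnonneg := hM.dotProduct_mulVec_nonneg u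
  rw [star_trivial, hMu, dotProduct_smul, smul_eq_mul] at hnonneg
  exact nonneg_of_mul_nonneg_left hnonneg (dotProduct_self_pos_of_ne_zero hu)

/-- Cauchy–Schwarz for the form `M`, paired against the eigenvector `u`. -/
lemma PosSemidef.mul_sq_dotProduct_le_of_mulVec_eq_smul [DecidableEq n] {M : Matrix n n ℝ}
    (hM : M.PosSemidef) {μ : ℝ} {u : n → ℝ} (hMu : M *ᵥ u = μ • u) (x : n → ℝ) :
    μ * (x ⬝ᵥ u) ^ 2 ≤ (x ⬝ᵥ M *ᵥ x) * (u ⬝ᵥ u) := by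
  have hcs := hM.dotProduct_mulVec_sq_le x u
  simp only [hMu, dotProduct_smul, smul_eq_mul] at hcs
  rcases eq_or_ne u 0 with rfl | hu
  · simp
  rcases (hM.nonneg_of_mulVec_eq_smul hu hMu).eq_or_lt with rfl | hμ
  · simp only [zero_mul]
    exact mul_nonneg (by simpa using hM.dotProduct_mulVec_nonneg x)
      (by simpa using dotProduct_star_self_nonneg u)
  · refine le_of_mul_le_mul_left ?_ hμ
    linarith

lemma IsHermitian.mul_dotProduct_self_le [DecidableEq n] {M : Matrix n n ℝ} (hM : M.IsHermitian)
    {c : ℝ} (hc : ∀ μ : ℝ, (∃ v : n → ℝ, v ≠ 0 ∧ M *ᵥ v = μ • v) → c ≤ μ) (x : n → ℝ) :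
    c * (x ⬝ᵥ x) ≤ x ⬝ᵥ M *ᵥ x := by
  have hN : (M - c • 1).IsHermitian := hM.sub (isHermitian_one.smul (IsSelfAdjoint.all c))
  have hNmulVec (v : n → ℝ) : (M - c • 1) *ᵥ v = M *ᵥ v - c • v := by
    rw [sub_mulVec, smul_mulVec, one_mulVec]
  have hpsd : (M - c • 1).PosSemidef := by
    refine hN.posSemidef_iff_eigenvalues_nonneg.mpr fun i => ?_
    have hv := hN.mulVec_eigenvectorBasis i
    have hne : (hN.eigenvectorBasis i).ofLp ≠ 0 := fun h =>
      hN.eigenvectorBasis.orthonormal.ne_zero i (by simpa using congrArg (WithLp.toLp 2) h)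
    have hMv : M *ᵥ (hN.eigenvectorBasis i).ofLp =
        (hN.eigenvalues i + c) • (hN.eigenvectorBasis i).ofLp := by
      rw [add_smul, ← hv, hNmulVec, sub_add_cancel]
    simpa using hc _ ⟨_, hne, hMv⟩
  have := hpsd.dotProduct_mulVec_nonneg x
  rw [star_trivial, hNmulVec, dotProduct_sub, dotProduct_smul, smul_eq_mul] at this
  linarith

lemma IsHermitian.inv_mulVec_dotProduct_mulVec {S : Matrix n n ℝ} [DecidableEq n]
    (hS : S.IsHermitian) (hSunit : IsUnit S) (z u : n → ℝ) :
    (S⁻¹ *ᵥ z) ⬝ᵥ (S *ᵥ u) = z ⬝ᵥ u := by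
  rw [hS.dotProduct_mulVec_comm, mulVec_mulVec,
    mul_nonsing_inv S ((isUnit_iff_isUnit_det S).mp hSunit), one_mulVec, dotProduct_comm]

lemma IsHermitian.mulVec_dotProduct_mulVec_self {S : Matrix n n ℝ} (hS : S.IsHermitian)
    (u : n → ℝ) : (S *ᵥ u) ⬝ᵥ (S *ᵥ u) = u ⬝ᵥ (S * S) *ᵥ u := by
  rw [hS.dotProduct_mulVec_comm, mulVec_mulVec]

end Matrix

lemma exists_mul_dotProduct_self_le_sq_of_forall_unit {ι n : Type*} [Fintype n]
    {x : ι → n → ℝ} {c : ℝ} (h : ∀ v : n → ℝ, v ⬝ᵥ v = 1 → ∃ t, (x t ⬝ᵥ v) ^ 2 ≥ c)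
    {w : n → ℝ} (hw : w ≠ 0) : ∃ t, c * (w ⬝ᵥ w) ≤ (x t ⬝ᵥ w) ^ 2 := by
  have hww : 0 < w ⬝ᵥ w := dotProduct_self_pos_of_ne_zero hw
  set r := √(w ⬝ᵥ w)
  have hr : 0 < r := Real.sqrt_pos.mpr hww
  have hr2 : r ^ 2 = w ⬝ᵥ w := Real.sq_sqrt hww.le
  obtain ⟨t, ht⟩ := h (r⁻¹ • w) (by
    rw [smul_dotProduct, dotProduct_smul, smul_eq_mul, smul_eq_mul, ← hr2]
    field_simp)
  refine ⟨t, ?_⟩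
  rw [dotProduct_smul, smul_eq_mul, mul_pow, inv_pow, hr2, ge_iff_le, inv_mul_eq_div,
    le_div_iff₀ hww] at ht
  exact ht

/-- if the whitened vectors `w_t = Σ^{-1/2} z_t` satisfy
`inf_{‖v‖=1} max_t ⟨w_t, v⟩² ≥ 1 − ε`, then for every positive definite `A`,
`max_t ‖z_t‖_A² ≥ (1 − ε) λ₁(A) λ_min(Σ)`. Here `S` is the positive definite square root
of `Σ`. -/
theorem stmt10 {d τ : ℕ} (z : Fin τ → (Fin d → ℝ))
    (Sig S : Matrix (Fin d) (Fin d) ℝ) (hSig : Sig.PosDef) (hS : S.PosDef)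
    (hSsq : S * S = Sig) (ε : ℝ) (hε : ε ∈ Set.Ioo (0 : ℝ) 1)
    (hgood : ∀ v : Fin d → ℝ, v ⬝ᵥ v = 1 →
      ∃ t : Fin τ, ((S⁻¹ *ᵥ z t) ⬝ᵥ v) ^ 2 ≥ 1 - ε)
    (A : Matrix (Fin d) (Fin d) ℝ) (hA : A.PosDef)
    (lamA lamSig : ℝ) (hlamA : IsMaxEigenvalue A lamA)
    (hlamSig : IsMinEigenvalue Sig lamSig) :
    ∃ t : Fin τ, z t ⬝ᵥ A *ᵥ z t ≥ (1 - ε) * lamA * lamSig := by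
  obtain ⟨u, hu, hAu⟩ := hlamA.1
  have hSu : S *ᵥ u ≠ 0 := by
    simpa using (mulVec_injective_iff_isUnit.mpr hS.isUnit).ne hu
  obtain ⟨t, ht⟩ := exists_mul_dotProduct_self_le_sq_of_forall_unit hgood hSu
  rw [hS.isHermitian.inv_mulVec_dotProduct_mulVec hS.isUnit (z t) u,
    hS.isHermitian.mulVec_dotProduct_mulVec_self, hSsq] at ht
  refine ⟨t, le_of_mul_le_mul_right ?_ (dotProduct_self_pos_of_ne_zero hu)⟩
  have hRayleigh := hSig.isHermitian.mul_dotProduct_self_le hlamSig.2 u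
  have hlamA_nonneg := hA.posSemidef.nonneg_of_mulVec_eq_smul hu hAu
  have hε' : 0 ≤ 1 - ε := by linarith [hε.2]
  calc (1 - ε) * lamA * lamSig * (u ⬝ᵥ u) = lamA * ((1 - ε) * (lamSig * (u ⬝ᵥ u))) := by ring
    _ ≤ lamA * (z t ⬝ᵥ u) ^ 2 := by
      gcongr
      exact (mul_le_mul_of_nonneg_left hRayleigh hε').trans ht
    _ ≤ z t ⬝ᵥ A *ᵥ z t * (u ⬝ᵥ u) :=
      hA.posSemidef.mul_sq_dotProduct_le_of_mulVec_eq_smul hAu (z t)
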